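/- arXiv:1301.6927 — 5 statements merged into one kernel-verified Lean document; each statement's English description precedes it below -/
import Mathlib

section
/- Let g be holomorphic on the upper half-plane H, continuous on its closure, satisfying |g(z)| ≤ c₁(|z|+1)^n / y^m for z = x + iy in H, and |g(z)| ≤ c₂ on the real axis, for some positive real constants c₁, c₂ and positive integers n, m. Then |g(z)| ≤ c₂ for all z in H. -/
/-!
The growth bound only degenerates at the real axis. For `z` close to the axis, apply the maximum
modulus principle on the box `(re z - 1, re z + 1) × (0, 1)` to
`g w * ((w - (re z - 1)) * (w - (re z + 1))) ^ m`: the polynomial vanishes on the vertical sides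
to first order in `im w`, which cancels the factor `(im w)⁻ᵐ` there, and it has modulus at least
`1` at `z`. This gives `‖g z‖ ≤ C * (1 + ‖z‖) ^ n` on the closed half-plane.

For `0 < δ ≤ 1` the function `g w / (1 - δ I w) ^ n` is then bounded on the closed half-plane and
bounded by `c₂` on the real axis, so the Phragmén–Lindelöf principle for a half-plane bounds it
by `c₂`; let `δ → 0`.
-/

open Complex Set Filter Topology

variable {E : Type*} [NormedAddCommGroup E] [NormedSpace ℂ E]

theorem norm_le_of_bounded_upperHalfPlane {f : ℂ → E} {B C : ℝ}
    (hd : DiffContOnCl ℂ f {z | 0 < z.im}) (hB : ∀ z : ℂ, 0 ≤ z.im → ‖f z‖ ≤ B)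
    (hreal : ∀ x : ℝ, ‖f x‖ ≤ C) {z : ℂ} (hz : 0 ≤ z.im) : ‖f z‖ ≤ C := by
  have hrot : DiffContOnCl ℂ (f ∘ (I * ·)) {w | 0 < w.re} :=
    hd.comp (differentiable_id.const_mul I).diffContOnCl fun w hw => by simpa using hw
  have hbdd : ∀ w : ℂ, 0 ≤ w.re → ‖(f ∘ (I * ·)) w‖ ≤ B := fun w hw => hB _ (by simpa using hw)
  have := PhragmenLindelof.right_half_plane_of_bounded_on_real hrot
    ⟨0, two_pos, 0, .of_bound B <| eventually_inf_principal.2 <| .of_forall fun w hw => ?_⟩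
    (isBoundedUnder_of_eventually_le <| eventually_map.2 <|
      (eventually_ge_atTop 0).mono fun x hx => hbdd x (by simpa using hx))
    (fun x => ?_) (C := C) (z := -I * z) (by simpa using hz)
  · simpa [← mul_assoc] using this
  · simpa using hbdd w hw.le
  · simpa [mul_left_comm I] using hreal (-x)

section Damping

variable {δ : ℝ} {w : ℂ}

lemma one_le_norm_one_sub_mul_I_mul (hδ : 0 ≤ δ) (hw : 0 ≤ w.im) : 1 ≤ ‖1 - δ * I * w‖ :=
  calc (1 : ℝ) ≤ (1 - δ * I * w).re := by simpa using mul_nonneg hδ hw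
    _ ≤ ‖1 - δ * I * w‖ := re_le_norm _

lemma mul_one_add_norm_le_two_mul_norm_one_sub_mul_I_mul (hδ₀ : 0 ≤ δ) (hδ₁ : δ ≤ 1)
    (hw : 0 ≤ w.im) : δ * (1 + ‖w‖) ≤ 2 * ‖1 - δ * I * w‖ := by
  have hre : 1 + δ * w.im ≤ ‖1 - δ * I * w‖ := by simpa using re_le_norm (1 - δ * I * w)
  have him : δ * |w.re| ≤ ‖1 - δ * I * w‖ := by
    simpa [abs_mul, abs_of_nonneg hδ₀] using abs_im_le_norm (1 - δ * I * w)
  have hw' : ‖w‖ ≤ |w.re| + w.im := by simpa [abs_of_nonneg hw] using norm_le_abs_re_add_abs_im w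
  nlinarith

end Damping

theorem norm_le_norm_one_sub_mul_I_mul_pow_mul_of_polynomial_growth {g : ℂ → E} {C c δ : ℝ}
    {N : ℕ} (hd : DiffContOnCl ℂ g {z | 0 < z.im})
    (hgrowth : ∀ z : ℂ, 0 ≤ z.im → ‖g z‖ ≤ C * (1 + ‖z‖) ^ N)
    (hreal : ∀ x : ℝ, ‖g x‖ ≤ c) (hδ₀ : 0 < δ) (hδ₁ : δ ≤ 1) {z : ℂ} (hz : 0 ≤ z.im) :
    ‖g z‖ ≤ ‖1 - δ * I * z‖ ^ N * c := by
  have hC : 0 ≤ C := (norm_nonneg _).trans (by simpa using hgrowth 0 le_rfl)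
  have hq : ∀ w : ℂ, 0 ≤ w.im → 0 < ‖1 - δ * I * w‖ ^ N := fun w hw =>
    pow_pos (one_pos.trans_le (one_le_norm_one_sub_mul_I_mul hδ₀.le hw)) N
  have hnorm : ∀ w, ‖((1 - δ * I * w) ^ N)⁻¹ • g w‖ = (‖1 - δ * I * w‖ ^ N)⁻¹ * ‖g w‖ :=
    fun w => by rw [norm_smul, norm_inv, norm_pow]
  have hdd : DiffContOnCl ℂ (fun w => ((1 - δ * I * w) ^ N)⁻¹ • g w) {w | 0 < w.im} :=
    .smul ((Differentiable.diffContOnCl (by fun_prop)).inv fun w hw =>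
      norm_pos_iff.1 (by simpa using hq w (by simpa using hw))) hd
  have hbound : ∀ w : ℂ, 0 ≤ w.im →
      ‖((1 - δ * I * w) ^ N)⁻¹ • g w‖ ≤ C * (2 / δ) ^ N := fun w hw => by
    rw [hnorm, inv_mul_le_iff₀ (hq w hw)]
    calc ‖g w‖ ≤ C * (1 + ‖w‖) ^ N := hgrowth w hw
      _ = C * (2 / δ) ^ N * (δ * (1 + ‖w‖) / 2) ^ N := by
        rw [mul_assoc, ← mul_pow]; field_simp
      _ ≤ C * (2 / δ) ^ N * ‖1 - δ * I * w‖ ^ N := by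
        gcongr
        linarith [mul_one_add_norm_le_two_mul_norm_one_sub_mul_I_mul hδ₀.le hδ₁ hw]
      _ = _ := mul_comm _ _
  have hbound_real : ∀ x : ℝ, ‖((1 - δ * I * x) ^ N)⁻¹ • g x‖ ≤ c := fun x => by
    rw [hnorm]
    refine (mul_le_of_le_one_left (norm_nonneg _) (inv_le_one_of_one_le₀ ?_)).trans (hreal x)
    exact one_le_pow₀ (one_le_norm_one_sub_mul_I_mul hδ₀.le (by simp))
  have := norm_le_of_bounded_upperHalfPlane hdd hbound hbound_real hz
  rwa [hnorm, inv_mul_le_iff₀ (hq z hz)] at this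

theorem norm_le_of_polynomial_growth_upperHalfPlane {g : ℂ → E} {C c : ℝ} {N : ℕ}
    (hd : DiffContOnCl ℂ g {z | 0 < z.im})
    (hgrowth : ∀ z : ℂ, 0 ≤ z.im → ‖g z‖ ≤ C * (1 + ‖z‖) ^ N)
    (hreal : ∀ x : ℝ, ‖g x‖ ≤ c) {z : ℂ} (hz : 0 ≤ z.im) : ‖g z‖ ≤ c := by
  have hlim : Tendsto (fun δ : ℝ => ‖1 - δ * I * z‖ ^ N * c) (𝓝[>] 0) (𝓝 c) :=
    ((by fun_prop : Continuous fun δ : ℝ => ‖1 - δ * I * z‖ ^ N * c).tendsto' 0 c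
      (by simp)).mono_left nhdsWithin_le_nhds
  exact ge_of_tendsto hlim <| mem_of_superset (Ioc_mem_nhdsGT one_pos) fun δ hδ =>
    norm_le_norm_one_sub_mul_I_mul_pow_mul_of_polynomial_growth hd hgrowth hreal hδ.1 hδ.2 hz

lemma norm_sub_ofReal_le {w : ℂ} (a : ℝ) (hw : 0 ≤ w.im) : ‖w - a‖ ≤ |w.re - a| + w.im := by
  simpa [abs_of_nonneg hw] using norm_le_abs_re_add_abs_im (w - a)

def axisBox (x : ℝ) : Set ℂ := Ioo (x - 1) (x + 1) ×ℂ Ioo 0 1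

section AxisBox

variable {x : ℝ} {w : ℂ}

lemma closure_axisBox (x : ℝ) : closure (axisBox x) = Icc (x - 1) (x + 1) ×ℂ Icc 0 1 := by
  rw [axisBox, closure_reProdIm, closure_Ioo (by linarith), closure_Ioo zero_ne_one]

lemma frontier_axisBox (x : ℝ) :
    frontier (axisBox x) = Icc (x - 1) (x + 1) ×ℂ {0, 1} ∪ {x - 1, x + 1} ×ℂ Icc 0 1 := by
  rw [axisBox, frontier_reProdIm, closure_Ioo (by linarith), closure_Ioo zero_ne_one,
    frontier_Ioo zero_lt_one, frontier_Ioo (by linarith)]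

lemma norm_sub_ofReal_le_three_of_mem_closure_axisBox (hw : w ∈ closure (axisBox x))
    {a : ℝ} (ha : |x - a| ≤ 1) : ‖w - a‖ ≤ 3 := by
  rw [closure_axisBox, mem_reProdIm] at hw
  obtain ⟨⟨hre₀, hre₁⟩, him₀, him₁⟩ := hw
  have : |w.re - a| ≤ 2 := by rw [abs_le] at ha ⊢; constructor <;> linarith
  linarith [norm_sub_ofReal_le a him₀]

lemma norm_mul_sub_le_nine_of_mem_closure_axisBox (hw : w ∈ closure (axisBox x)) :
    ‖(w - (x - 1 : ℝ)) * (w - (x + 1 : ℝ))‖ ≤ 9 := by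
  rw [norm_mul]
  have h₁ := norm_sub_ofReal_le_three_of_mem_closure_axisBox hw (a := x - 1) (by simp)
  have h₂ := norm_sub_ofReal_le_three_of_mem_closure_axisBox hw (a := x + 1) (by simp)
  nlinarith [norm_nonneg (w - (x - 1 : ℝ))]

lemma norm_mul_sub_le_nine_mul_im_of_mem_frontier_axisBox (hw : w ∈ frontier (axisBox x))
    (him : 0 < w.im) : ‖(w - (x - 1 : ℝ)) * (w - (x + 1 : ℝ))‖ ≤ 9 * w.im := by
  have hcl := frontier_subset_closure hw
  rw [norm_mul]
  have h₁ := norm_sub_ofReal_le_three_of_mem_closure_axisBox hcl (a := x - 1) (by simp)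
  have h₂ := norm_sub_ofReal_le_three_of_mem_closure_axisBox hcl (a := x + 1) (by simp)
  rw [frontier_axisBox] at hw
  rcases hw with ⟨-, htop⟩ | ⟨hside, -⟩
  · have : w.im = 1 := by simpa [him.ne'] using htop
    nlinarith [norm_nonneg (w - (x - 1 : ℝ))]
  · rcases hside with hside | hside
    · have := norm_sub_ofReal_le (x - 1) him.le
      rw [hside, sub_self, abs_zero, zero_add] at this
      nlinarith [norm_nonneg (w - (x + 1 : ℝ))]
    · have := norm_sub_ofReal_le (x + 1) him.le
      rw [(hside : w.re = x + 1), sub_self, abs_zero, zero_add] at this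
      nlinarith [norm_nonneg (w - (x - 1 : ℝ))]

lemma norm_le_abs_add_two_of_mem_closure_axisBox (hw : w ∈ closure (axisBox x)) :
    ‖w‖ ≤ |x| + 2 := by
  have hw' := hw
  rw [closure_axisBox, mem_reProdIm] at hw'
  have hre : |w.re - x| ≤ 1 := abs_le.2 ⟨by linarith [hw'.1.1], by linarith [hw'.1.2]⟩
  calc ‖w‖ ≤ ‖w - x‖ + ‖(x : ℂ)‖ := norm_le_norm_sub_add w x
    _ ≤ (|w.re - x| + w.im) + |x| := by
      rw [norm_real, Real.norm_eq_abs]; gcongr; exact norm_sub_ofReal_le x hw'.2.1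
    _ ≤ |x| + 2 := by linarith [hw'.2.2]

lemma isBounded_axisBox (x : ℝ) : Bornology.IsBounded (axisBox x) :=
  (Metric.isBounded_Ioo _ _).reProdIm (Metric.isBounded_Ioo _ _)

lemma axisBox_subset_setOf_im_pos (x : ℝ) : axisBox x ⊆ {w | 0 < w.im} := fun _ hw => hw.2.1

end AxisBox

section Growth

variable {g : ℂ → E} {c₁ c₂ : ℝ} {n m : ℕ}

theorem norm_le_of_growth_of_im_lt_one (hc₁ : 0 ≤ c₁) (hd : DiffContOnCl ℂ g {z | 0 < z.im})
    (hgrowth : ∀ z : ℂ, 0 < z.im → ‖g z‖ ≤ c₁ * (‖z‖ + 1) ^ n / z.im ^ m)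
    (hreal : ∀ x : ℝ, ‖g x‖ ≤ c₂) {z : ℂ} (hz₀ : 0 < z.im) (hz₁ : z.im < 1) :
    ‖g z‖ ≤ 9 ^ m * max c₂ (c₁ * (‖z‖ + 3) ^ n) := by
  set x := z.re
  set p : ℂ → ℂ := fun w => (w - (x - 1 : ℝ)) * (w - (x + 1 : ℝ))
  have hz_mem : z ∈ axisBox x := ⟨⟨by linarith, by linarith⟩, hz₀, hz₁⟩
  have hfrontier : ∀ w ∈ frontier (axisBox x),
      ‖p w ^ m • g w‖ ≤ 9 ^ m * max c₂ (c₁ * (‖z‖ + 3) ^ n) := fun w hw => by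
    have hcl := frontier_subset_closure hw
    rw [norm_smul, norm_pow]
    rcases (show 0 ≤ w.im from (closure_axisBox x ▸ hcl).2.1).eq_or_lt with him | him
    · have hgw : ‖g w‖ ≤ c₂ := by lift w to ℝ using him.symm; exact hreal w
      calc ‖p w‖ ^ m * ‖g w‖ ≤ 9 ^ m * c₂ :=
            mul_le_mul (pow_le_pow_left₀ (norm_nonneg _)
              (norm_mul_sub_le_nine_of_mem_closure_axisBox hcl) m) hgw (norm_nonneg _)
              (by positivity)
        _ ≤ _ := by gcongr; exact le_max_left _ _
    · calc ‖p w‖ ^ m * ‖g w‖ ≤ (9 * w.im) ^ m * (c₁ * (‖w‖ + 1) ^ n / w.im ^ m) :=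
            mul_le_mul (pow_le_pow_left₀ (norm_nonneg _)
              (norm_mul_sub_le_nine_mul_im_of_mem_frontier_axisBox hw him) m) (hgrowth w him)
              (norm_nonneg _) (by positivity)
        _ = 9 ^ m * (c₁ * (‖w‖ + 1) ^ n) := by
            rw [mul_pow]; field_simp
        _ ≤ 9 ^ m * (c₁ * (‖z‖ + 3) ^ n) := by
            gcongr 9 ^ m * (c₁ * ?_ ^ n)
            linarith [norm_le_abs_add_two_of_mem_closure_axisBox hcl, abs_re_le_norm z]
        _ ≤ _ := by gcongr; exact le_max_right _ _
  have hpz : 1 ≤ ‖p z‖ ^ m := by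
    refine one_le_pow₀ ?_
    rw [norm_mul]
    have h₁ : 1 ≤ ‖z - (x - 1 : ℝ)‖ := by simpa [x] using abs_re_le_norm (z - (x - 1 : ℝ))
    have h₂ : 1 ≤ ‖z - (x + 1 : ℝ)‖ := by simpa [x] using abs_re_le_norm (z - (x + 1 : ℝ))
    nlinarith
  calc ‖g z‖ ≤ ‖p z‖ ^ m * ‖g z‖ := le_mul_of_one_le_left (norm_nonneg _) hpz
    _ = ‖p z ^ m • g z‖ := by rw [norm_smul, norm_pow]
    _ ≤ _ := Complex.norm_le_of_forall_mem_frontier_norm_le (isBounded_axisBox x)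
      ((Differentiable.diffContOnCl (by fun_prop)).smul
        (hd.mono (axisBox_subset_setOf_im_pos x))) hfrontier (subset_closure hz_mem)

theorem norm_le_mul_one_add_norm_pow_of_growth (hc₁ : 0 ≤ c₁)
    (hd : DiffContOnCl ℂ g {z | 0 < z.im})
    (hgrowth : ∀ z : ℂ, 0 < z.im → ‖g z‖ ≤ c₁ * (‖z‖ + 1) ^ n / z.im ^ m)
    (hreal : ∀ x : ℝ, ‖g x‖ ≤ c₂) {z : ℂ} (hz : 0 ≤ z.im) :
    ‖g z‖ ≤ 9 ^ m * (c₂ + 3 ^ n * c₁) * (1 + ‖z‖) ^ n := by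
  have hc₂ : 0 ≤ c₂ := (norm_nonneg _).trans (hreal 0)
  set S := c₂ + c₁ * (‖z‖ + 3) ^ n
  have hc₂S : c₂ ≤ S := le_add_of_nonneg_right (by positivity)
  have hc₁S : c₁ * (‖z‖ + 3) ^ n ≤ S := le_add_of_nonneg_left hc₂
  have hS : S ≤ 9 ^ m * S := le_mul_of_one_le_left (by positivity) (one_le_pow₀ (by norm_num))
  suffices ‖g z‖ ≤ 9 ^ m * S by
    rw [mul_assoc]
    refine this.trans (mul_le_mul_of_nonneg_left ?_ (by positivity))
    calc S = c₂ + c₁ * (‖z‖ + 3) ^ n := rfl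
      _ ≤ c₂ * (1 + ‖z‖) ^ n + c₁ * (3 * (1 + ‖z‖)) ^ n := by
          gcongr
          · exact le_mul_of_one_le_right hc₂ (one_le_pow₀ (by simp))
          · linarith [norm_nonneg z]
      _ = (c₂ + 3 ^ n * c₁) * (1 + ‖z‖) ^ n := by rw [mul_pow]; ring
  rcases hz.eq_or_lt with him | him
  · have : ‖g z‖ ≤ c₂ := by lift z to ℝ using him.symm; exact hreal z
    linarith
  rcases lt_or_ge z.im 1 with him₁ | him₁
  · exact (norm_le_of_growth_of_im_lt_one hc₁ hd hgrowth hreal him him₁).trans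
      (by gcongr; exact max_le hc₂S hc₁S)
  · calc ‖g z‖ ≤ c₁ * (‖z‖ + 1) ^ n / z.im ^ m := hgrowth z him
      _ ≤ c₁ * (‖z‖ + 1) ^ n := div_le_self (by positivity) (one_le_pow₀ him₁)
      _ ≤ c₁ * (‖z‖ + 3) ^ n := by gcongr; norm_num
      _ ≤ 9 ^ m * S := hc₁S.trans hS

end Growth

theorem phragmen_lindelof_polygrowth_general (g : ℂ → ℂ) (c₁ c₂ : ℝ) (n m : ℕ)
    (hc₁ : 0 < c₁)
    (hg : DifferentiableOn ℂ g {z : ℂ | 0 < z.im})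
    (hgc : ContinuousOn g {z : ℂ | 0 ≤ z.im})
    (hgrowth : ∀ z : ℂ, 0 < z.im →
      ‖g z‖ ≤ c₁ * (‖z‖ + 1) ^ n / z.im ^ m)
    (hreal : ∀ x : ℝ, ‖g x‖ ≤ c₂) :
    ∀ z : ℂ, 0 < z.im → ‖g z‖ ≤ c₂ := by
  have hd : DiffContOnCl ℂ g {z | 0 < z.im} := ⟨hg, by rwa [closure_setOfPred_lt_im]⟩
  exact fun z hz => norm_le_of_polynomial_growth_upperHalfPlane hd
    (fun w hw => norm_le_mul_one_add_norm_pow_of_growth hc₁.le hd hgrowth hreal hw) hreal hz.le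

/-- Phragmén–Lindelöf type lemma: a holomorphic function on the upper half-plane,
continuous up to the boundary, with the stated polynomial-type growth and bounded by
`c₂` on the real axis, is bounded by `c₂` in the half-plane. -/
theorem phragmen_lindelof_polygrowth (g : ℂ → ℂ) (c₁ c₂ : ℝ) (n m : ℕ)
    (hc₁ : 0 < c₁) (hc₂ : 0 < c₂) (hn : 0 < n) (hm : 0 < m)
    (hg : DifferentiableOn ℂ g {z : ℂ | 0 < z.im})
    (hgc : ContinuousOn g {z : ℂ | 0 ≤ z.im})
    (hgrowth : ∀ z : ℂ, 0 < z.im →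
      ‖g z‖ ≤ c₁ * (‖z‖ + 1) ^ n / z.im ^ m)
    (hreal : ∀ x : ℝ, ‖g x‖ ≤ c₂) :
    ∀ z : ℂ, 0 < z.im → ‖g z‖ ≤ c₂ :=
  phragmen_lindelof_polygrowth_general g c₁ c₂ n m hc₁ hg hgc hgrowth hreal
end

section
/- Let Ω be a domain in the plane with real-analytic boundary on which Problem (1) has a solution, where Problem (1) asks for u harmonic and positive in Ω, u = 0 on ∂Ω, and |∇u| = 1 on ∂Ω, with u extending harmonically to a neighborhood of the closure of Ω. Then the solution u is unique. -/
/-- The partial derivative `u_x`. -/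
noncomputable def ux (u : ℂ → ℝ) (z : ℂ) : ℝ := fderiv ℝ u z 1

/-- The partial derivative `u_y`. -/
noncomputable def uy (u : ℂ → ℝ) (z : ℂ) : ℝ := fderiv ℝ u z Complex.I

/-- The norm of the gradient of `u`. -/
noncomputable def gradNorm (u : ℂ → ℝ) (z : ℂ) : ℝ :=
  Real.sqrt (ux u z ^ 2 + uy u z ^ 2)

/-- `u` is harmonic on `s`: twice continuously differentiable with vanishing Laplacian. -/
def HarmonicOnD (u : ℂ → ℝ) (s : Set ℂ) : Prop :=
  ContDiffOn ℝ 2 u s ∧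
  ∀ z ∈ s, fderiv ℝ (fun w => ux u w) z 1 + fderiv ℝ (fun w => uy u w) z Complex.I = 0

/-!
At a boundary point `p` the gradient of `u` does not vanish, so `u` has no local minimum there;
hence `p` is not isolated in `∂Ω`, and `∂Ω` has a nonzero tangent vector `t` at `p`. Both `du p`
and `dv p` annihilate `t` and have norm `1`, which forces `du p = ± dv p`. The holomorphic
function `(u ∓ v)_z` therefore vanishes on a set accumulating at a point of the connected set
`closure Ω`, so it vanishes identically, `u ∓ v` is locally constant on `Ω`, and its boundary
value is `0`. The sign `+` is excluded because `u + v > 0` in `Ω`.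
-/

open Complex Set Filter Topology Metric InnerProductSpace

section NormedSpace

variable {E : Type*} [NormedAddCommGroup E] [NormedSpace ℝ E]

theorem isPreconnected_ball_diff_singleton (h : 1 < Module.rank ℝ E) (p : E) (ε : ℝ) :
    IsPreconnected (ball p ε \ {p}) := by
  have himage : ball p ε \ {p} =
      (fun q : ℝ × E => p + q.1 • q.2) '' (Ioo 0 ε ×ˢ sphere 0 1) := by
    ext z
    constructor
    · rintro ⟨hz, hzp⟩
      have hd : ‖z - p‖ ≠ 0 := norm_ne_zero_iff.2 (sub_ne_zero.2 hzp)
      refine ⟨(‖z - p‖, ‖z - p‖⁻¹ • (z - p)), ⟨⟨?_, ?_⟩, ?_⟩, ?_⟩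
      · positivity
      · rwa [← dist_eq_norm]
      · simp [norm_smul, hd]
      · simp [smul_smul, hd]
    · rintro ⟨⟨r, w⟩, ⟨⟨hr0, hrε⟩, hw⟩, rfl⟩
      rw [mem_sphere_zero_iff_norm] at hw
      refine ⟨?_, ?_⟩
      · simpa [norm_smul, hw, abs_of_pos hr0] using hrε
      · rw [mem_singleton_iff, add_eq_left, ← norm_eq_zero, norm_smul, hw]
        simpa using hr0.ne'
  rw [himage]
  exact (isPreconnected_Ioo.prod (isPreconnected_sphere h 0 1)).image _ (by fun_prop)

theorem IsOpen.eventually_mem_of_not_accPt_frontier (h : 1 < Module.rank ℝ E) {Ω : Set E}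
    (hΩ : IsOpen Ω) {p : E} (hp : p ∈ frontier Ω) (hacc : ¬AccPt p (𝓟 (frontier Ω))) :
    ∀ᶠ z in 𝓝[≠] p, z ∈ Ω := by
  rw [accPt_iff_frequently_nhdsNE, not_frequently, eventually_nhdsWithin_iff] at hacc
  obtain ⟨ε, hε, hball⟩ := Metric.eventually_nhds_iff_ball.1 hacc
  have hpΩ : p ∉ Ω := fun hpΩ => hp.2 (by rwa [hΩ.interior_eq])
  have hsub : ball p ε \ {p} ⊆ Ω := by
    refine (isPreconnected_ball_diff_singleton h p ε).subset_left_of_subset_union hΩ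
      isClosed_closure.isOpen_compl (disjoint_compl_right.mono_left subset_closure) ?_ ?_
    · rintro z ⟨hz, hzp⟩
      by_cases hzc : z ∈ closure Ω
      · left
        by_contra hzΩ
        exact hball z hz hzp ⟨hzc, by rwa [hΩ.interior_eq]⟩
      · exact Or.inr hzc
    · obtain ⟨x, hx, hxΩ⟩ := mem_closure_iff.1 hp.1 (ball p ε) isOpen_ball (mem_ball_self hε)
      exact ⟨x, ⟨hx, fun hxp => hpΩ (hxp ▸ hxΩ)⟩, hxΩ⟩
  exact mem_of_superset (inter_mem_nhdsWithin _ (ball_mem_nhds p hε)) fun z hz => hsub ⟨hz.2, hz.1⟩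

theorem accPt_frontier_of_fderiv_ne_zero (h : 1 < Module.rank ℝ E) {Ω : Set E} (hΩ : IsOpen Ω)
    {u : E → ℝ} (hpos : ∀ z ∈ Ω, 0 < u z) {p : E} (hp : p ∈ frontier Ω) (hup : u p = 0)
    (hdu : fderiv ℝ u p ≠ 0) : AccPt p (𝓟 (frontier Ω)) := by
  by_contra hacc
  have hmin : IsLocalMin u p := by
    have := hΩ.eventually_mem_of_not_accPt_frontier h hp hacc
    rw [eventually_nhdsWithin_iff] at this
    filter_upwards [this] with z hz
    rcases eq_or_ne z p with rfl | hzp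
    · exact le_rfl
    · exact hup ▸ (hpos z (hz hzp)).le
  exact hdu hmin.fderiv_eq_zero

theorem fderiv_apply_eq_zero_of_mem_tangentConeAt {F : Type*} [NormedAddCommGroup F]
    [NormedSpace ℝ F] {g : E → F} {S : Set E} {p t : E} (hg : DifferentiableAt ℝ g p)
    (hS : ∀ z ∈ S, g z = 0) (hp : p ∈ S) (ht : t ∈ tangentConeAt ℝ S p) : fderiv ℝ g p t = 0 :=
  hg.hasFDerivAt.hasFDerivWithinAt.unique_on
    ((hasFDerivWithinAt_const (0 : F) p S).congr' hS hp) ht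

end NormedSpace

theorem Complex.eq_or_eq_neg_of_re_mul_eq_zero {a b t : ℂ} (ht : t ≠ 0) (hab : ‖a‖ = ‖b‖)
    (ha : (a * t).re = 0) (hb : (b * t).re = 0) : a = b ∨ a = -b := by
  have hI : ∀ c : ℂ, (c * t).re = 0 → c * t = ((c * t).im : ℂ) * I := fun c hc =>
    Complex.ext (by simp [hc]) (by simp)
  have hnorm : ∀ c : ℂ, (c * t).re = 0 → ‖c * t‖ = |(c * t).im| := fun c hc => by
    conv_lhs => rw [hI c hc]
    rw [norm_mul, norm_I, mul_one, norm_real, Real.norm_eq_abs]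
  have habs : |(a * t).im| = |(b * t).im| := by
    rw [← hnorm a ha, ← hnorm b hb, norm_mul, norm_mul, hab]
  rcases abs_eq_abs.1 habs with h | h
  · left
    exact mul_right_cancel₀ ht (by rw [hI a ha, hI b hb, h])
  · right
    exact mul_right_cancel₀ ht (by rw [hI a ha, neg_mul, hI b hb, h]; push_cast; ring)

/-- `2 ∂f/∂z = f_x - i f_y`, holomorphic when `f` is harmonic. -/
noncomputable def complexPartial (f : ℂ → ℝ) (z : ℂ) : ℂ := fderiv ℝ f z 1 - I * fderiv ℝ f z I

theorem re_complexPartial_mul (f : ℂ → ℝ) (z t : ℂ) :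
    (complexPartial f z * t).re = fderiv ℝ f z t := by
  conv_rhs => rw [← re_add_im t, ← mul_one (t.re : ℂ), ← real_smul, ← real_smul]
  simp only [complexPartial, map_add, map_smul, smul_eq_mul, mul_re, sub_re, sub_im, ofReal_re,
    ofReal_im, mul_im, I_re, I_im]
  ring

theorem norm_complexPartial (f : ℂ → ℝ) (z : ℂ) : ‖complexPartial f z‖ = gradNorm f z := by
  rw [norm_def, normSq_apply, gradNorm, ux, uy]
  simp only [complexPartial, sub_re, sub_im, mul_re, mul_im, I_re, I_im, ofReal_re, ofReal_im]
  ring_nf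

theorem fderiv_eq_zero_iff_complexPartial_eq_zero {f : ℂ → ℝ} {z : ℂ} :
    fderiv ℝ f z = 0 ↔ complexPartial f z = 0 := by
  refine ⟨fun h => by simp [complexPartial, h], fun h => ?_⟩
  ext t
  rw [← re_complexPartial_mul, h, zero_mul, zero_re, zero_apply]

theorem fderiv_eq_or_eq_neg_of_apply_eq_zero {f g : ℂ → ℝ} {z t : ℂ} (ht : t ≠ 0)
    (hnorm : gradNorm f z = gradNorm g z) (hf : fderiv ℝ f z t = 0) (hg : fderiv ℝ g z t = 0) :
    fderiv ℝ f z = fderiv ℝ g z ∨ fderiv ℝ f z = -fderiv ℝ g z := by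
  rw [← re_complexPartial_mul] at hf hg
  rw [← norm_complexPartial, ← norm_complexPartial] at hnorm
  rcases Complex.eq_or_eq_neg_of_re_mul_eq_zero ht hnorm hf hg with h | h
  · left
    ext s
    rw [← re_complexPartial_mul, h, re_complexPartial_mul]
  · right
    ext s
    rw [← re_complexPartial_mul, h, neg_mul, neg_re, re_complexPartial_mul]
    rfl

theorem HarmonicOnD.harmonicOnNhd {u : ℂ → ℝ} {U : Set ℂ} (hU : IsOpen U)
    (hu : HarmonicOnD u U) : HarmonicOnNhd u U := by
  have hC2 : ∀ z ∈ U, ContDiffAt ℝ 2 u z := fun z hz => hu.1.contDiffAt (hU.mem_nhds hz)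
  refine fun z hz => ⟨hC2 z hz, ?_⟩
  filter_upwards [hU.mem_nhds hz] with w hw
  have hd : DifferentiableAt ℝ (fderiv ℝ u) w :=
    ((hC2 w hw).fderiv_right (m := 1) (by norm_num)).differentiableAt (by norm_num)
  have hlap := hu.2 w hw
  simp only [ux, uy] at hlap
  rw [fderiv_clm_apply hd (differentiableAt_const _),
    fderiv_clm_apply hd (differentiableAt_const _)] at hlap
  simpa [laplacian_eq_iteratedFDeriv_complexPlane, iteratedFDeriv_two_apply] using hlap

theorem fderiv_sub_eq_zero_or_fderiv_add_eq_zero {S : Set ℂ} {u v : ℂ → ℝ} {p : ℂ}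
    (hu : DifferentiableAt ℝ u p) (hv : DifferentiableAt ℝ v p) (hacc : AccPt p (𝓟 S))
    (hp : p ∈ S) (huS : ∀ z ∈ S, u z = 0) (hvS : ∀ z ∈ S, v z = 0)
    (hnorm : gradNorm u p = gradNorm v p) :
    fderiv ℝ (u - v) p = 0 ∨ fderiv ℝ (u + v) p = 0 := by
  obtain ⟨t, ht, ht0⟩ := tangentConeAt_nonempty_of_properSpace (𝕜 := ℝ) hacc
  rcases fderiv_eq_or_eq_neg_of_apply_eq_zero ht0 hnorm
      (fderiv_apply_eq_zero_of_mem_tangentConeAt hu huS hp ht)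
      (fderiv_apply_eq_zero_of_mem_tangentConeAt hv hvS hp ht) with h | h
  · left
    rw [fderiv_sub hu hv, h, sub_self]
  · right
    rw [fderiv_add hu hv, h, neg_add_cancel]

theorem InnerProductSpace.HarmonicOnNhd.fderiv_eq_zero_of_frequently {f : ℂ → ℝ} {s : Set ℂ}
    (hf : HarmonicOnNhd f s) (hs : IsPreconnected s) {p : ℂ} (hp : p ∈ s)
    (h : ∃ᶠ z in 𝓝[≠] p, fderiv ℝ f z = 0) {z : ℂ} (hz : z ∈ s) : fderiv ℝ f z = 0 := by
  have hF : AnalyticOnNhd ℂ (complexPartial f) s := fun x hx =>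
    HarmonicAt.analyticAt_complex_partial (hf x hx)
  exact fderiv_eq_zero_iff_complexPartial_eq_zero.2 <|
    hF.eqOn_zero_of_preconnected_of_frequently_eq_zero hs hp
      (h.mono fun _ => fderiv_eq_zero_iff_complexPartial_eq_zero.1) hz

theorem eqOn_zero_of_frequently_fderiv_eq_zero {Ω U : Set ℂ} {w : ℂ → ℝ} (hΩ : IsOpen Ω)
    (hconn : IsPreconnected Ω) (hclos : closure Ω ⊆ U) (hw : HarmonicOnNhd w U) {p : ℂ}
    (hp : p ∈ closure Ω) (hwp : w p = 0) (h : ∃ᶠ z in 𝓝[≠] p, fderiv ℝ w z = 0) :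
    EqOn w 0 Ω := by
  have hwΩ : HarmonicOnNhd w (closure Ω) := fun z hz => hw z (hclos hz)
  obtain ⟨a, ha⟩ := hΩ.exists_is_const_of_fderiv_eq_zero hconn
    (fun z hz =>
      ((hwΩ z (subset_closure hz)).1.differentiableAt (by norm_num)).differentiableWithinAt)
    (fun z hz => hwΩ.fderiv_eq_zero_of_frequently hconn.closure hp h (subset_closure hz))
  have hclosure : EqOn w (fun _ => a) (closure Ω) :=
    EqOn.of_subset_closure ha hwΩ.continuousOn continuousOn_const subset_closure subset_rfl
  intro z hz
  rw [ha z hz, Pi.zero_apply, ← hwp]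
  exact (hclosure hp).symm

/-- Uniqueness of the solution to the overdetermined problem (1):
two solutions extending harmonically to a neighborhood of the closure agree on `Ω`. -/
theorem exceptional_solution_unique (Ω U : Set ℂ) (u v : ℂ → ℝ)
    (hΩ : IsOpen Ω) (hconn : IsConnected Ω) (hfr : (frontier Ω).Nonempty)
    (hU : IsOpen U) (hclos : closure Ω ⊆ U)
    (hu : HarmonicOnD u U) (hv : HarmonicOnD v U)
    (hupos : ∀ z ∈ Ω, 0 < u z) (hvpos : ∀ z ∈ Ω, 0 < v z)
    (hub : ∀ z ∈ frontier Ω, u z = 0) (hvb : ∀ z ∈ frontier Ω, v z = 0)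
    (hug : ∀ z ∈ frontier Ω, gradNorm u z = 1)
    (hvg : ∀ z ∈ frontier Ω, gradNorm v z = 1) :
    Set.EqOn u v Ω := by
  obtain ⟨p₀, hp₀⟩ := hfr
  have hu' := hu.harmonicOnNhd hU
  have hv' := hv.harmonicOnNhd hU
  have hdiff {w : ℂ → ℝ} (hw : HarmonicOnNhd w U) {p : ℂ} (hp : p ∈ frontier Ω) :
      DifferentiableAt ℝ w p :=
    (hw p (hclos (frontier_subset_closure hp))).1.differentiableAt (by norm_num)
  have hacc : ∀ p ∈ frontier Ω, AccPt p (𝓟 (frontier Ω)) := fun p hp =>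
    accPt_frontier_of_fderiv_ne_zero (by simp [Complex.rank_real_complex]) hΩ hupos hp (hub p hp)
      fun h => by
        simpa [← norm_complexPartial, fderiv_eq_zero_iff_complexPartial_eq_zero.1 h] using hug p hp
  have hfreq : (∃ᶠ z in 𝓝[≠] p₀, fderiv ℝ (u - v) z = 0) ∨
      ∃ᶠ z in 𝓝[≠] p₀, fderiv ℝ (u + v) z = 0 :=
    frequently_or_distrib.1 <| (accPt_iff_frequently_nhdsNE.1 (hacc p₀ hp₀)).mono fun p hp =>
      fderiv_sub_eq_zero_or_fderiv_add_eq_zero (hdiff hu' hp) (hdiff hv' hp) (hacc p hp) hp hub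
        hvb ((hug p hp).trans (hvg p hp).symm)
  have hvanish {w : ℂ → ℝ} (hw : HarmonicOnNhd w U) (hwp : w p₀ = 0)
      (h : ∃ᶠ z in 𝓝[≠] p₀, fderiv ℝ w z = 0) : EqOn w 0 Ω :=
    eqOn_zero_of_frequently_fderiv_eq_zero hΩ hconn.isPreconnected hclos hw
      (frontier_subset_closure hp₀) hwp h
  rcases hfreq with h | h
  · exact fun z hz => sub_eq_zero.1 (hvanish (hu'.sub hv') (by simp [hub p₀ hp₀, hvb p₀ hp₀]) h hz)
  · obtain ⟨x, hx⟩ := hconn.nonempty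
    have hsum := hvanish (hu'.add hv') (by simp [hub p₀ hp₀, hvb p₀ hp₀]) h hx
    simp only [Pi.add_apply, Pi.zero_apply] at hsum
    linarith [hupos x hx, hvpos x hx]
end

section
/- Let u be a harmonic function on a planar domain Ω, smooth up to the boundary, with u = 0 and |∇u| = 1 on ∂Ω, u > 0 in Ω, and |∇u| < 1 in Ω. Then at each boundary point the curvature of ∂Ω (with respect to the inward normal ∇u) is strictly positive in the sense that, after rotating so that ∇u = (1,0) at the point, one has u_xx < 0 and u_yy > 0 there; consequently the signed curvature κ = (u_xx u_y² + u_yy u_x² − 2u_xy u_x u_y)/|∇u|³ is positive at every boundary point. -/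
/-- The second partial derivative `u_xx`. -/
noncomputable def uxx (u : ℂ → ℝ) (z : ℂ) : ℝ := fderiv ℝ (fun w => ux u w) z 1

/-- The second partial derivative `u_xy`. -/
noncomputable def uxy (u : ℂ → ℝ) (z : ℂ) : ℝ := fderiv ℝ (fun w => ux u w) z Complex.I

/-- The second partial derivative `u_yy`. -/
noncomputable def uyy (u : ℂ → ℝ) (z : ℂ) : ℝ := fderiv ℝ (fun w => uy u w) z Complex.I

open Set Filter Metric Topology InnerProductSpace ComplexConjugate Complex
open scoped Gradient

theorem IsPreconnected.subset_of_disjoint_frontier {X : Type*} [TopologicalSpace X] {s u : Set X}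
    (hs : IsPreconnected s) (hu : IsOpen u) (hne : (s ∩ u).Nonempty)
    (hd : Disjoint s (frontier u)) : s ⊆ u := by
  refine hs.subset_of_closure_inter_subset hu hne fun x ⟨hxu, hxs⟩ => ?_
  rw [closure_eq_self_union_frontier] at hxu
  exact hxu.resolve_right (hd.notMem_of_mem_left hxs)

section Calculus

variable {E F : Type*} [NormedAddCommGroup E] [NormedSpace ℝ E]
  [NormedAddCommGroup F] [NormedSpace ℝ F]

theorem ContDiffAt.exists_norm_sub_sub_fderiv_le {f : E → F} {x₀ : E} (hf : ContDiffAt ℝ 2 f x₀) :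
    ∃ M : ℝ, 0 ≤ M ∧ ∃ s ∈ 𝓝 x₀, ∀ x ∈ s, ∀ y ∈ s,
      ‖f y - f x - fderiv ℝ f x (y - x)‖ ≤ M * ‖y - x‖ ^ 2 := by
  obtain ⟨K, t, ht, hK⟩ := (hf.fderiv_right (m := 1) le_rfl).exists_lipschitzOnWith
  have hdiff : ∀ᶠ y in 𝓝 x₀, DifferentiableAt ℝ f y :=
    (hf.eventually (by simp)).mono fun y hy => hy.differentiableAt two_ne_zero
  obtain ⟨ε, hε, hsub⟩ := Metric.mem_nhds_iff.1 (inter_mem ht hdiff)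
  refine ⟨K, K.2, ball x₀ ε, ball_mem_nhds x₀ hε, fun x hx y hy => ?_⟩
  have hseg : segment ℝ x y ⊆ ball x₀ ε := (convex_ball x₀ ε).segment_subset hx hy
  have hbound : ∀ v ∈ segment ℝ x y, ‖fderiv ℝ f v - fderiv ℝ f x‖ ≤ (K : ℝ) * ‖y - x‖ := by
    intro v hv
    have hvx : ‖v - x‖ ≤ ‖y - x‖ := by
      have h := dist_add_dist_of_mem_segment hv
      rw [dist_comm x v, dist_comm x y, dist_eq_norm, dist_eq_norm, dist_eq_norm] at h
      linarith [norm_nonneg (v - y)]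
    calc ‖fderiv ℝ f v - fderiv ℝ f x‖ ≤ K * ‖v - x‖ := by
          simpa only [dist_eq_norm] using hK.dist_le_mul v (hsub (hseg hv)).1 x (hsub hx).1
      _ ≤ K * ‖y - x‖ := by gcongr
  calc ‖f y - f x - fderiv ℝ f x (y - x)‖ ≤ K * ‖y - x‖ * ‖y - x‖ :=
        (convex_segment x y).norm_image_sub_le_of_norm_hasFDerivWithin_le'
          (fun v hv => ((hsub (hseg hv)).2.hasFDerivAt).hasFDerivWithinAt) hbound
          (left_mem_segment ℝ x y) (right_mem_segment ℝ x y)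
    _ = K * ‖y - x‖ ^ 2 := by ring

theorem fderiv_fderiv_apply {f : E → F} {x : E}
    (hf : DifferentiableAt ℝ (fderiv ℝ f) x) (v w : E) :
    fderiv ℝ (fun y => fderiv ℝ f y v) x w = fderiv ℝ (fderiv ℝ f) x w v := by
  rw [(hf.hasFDerivAt.clm_apply (hasFDerivAt_const v x)).fderiv]
  simp

end Calculus

section InteriorBall

variable {E : Type*} [NormedAddCommGroup E] [InnerProductSpace ℝ E]

theorem sq_norm_sub_lt_of_mem_ball_add_smul {w ν x : E} {r : ℝ} (hν : ‖ν‖ = 1)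
    (hx : x ∈ ball (w + r • ν) r) : ‖x - w‖ ^ 2 < 2 * r * ⟪ν, x - w⟫_ℝ := by
  have hr : 0 < r := pos_of_mem_ball hx
  have h : ‖(x - w) - r • ν‖ ^ 2 < r ^ 2 := by
    rw [mem_ball, dist_eq_norm, ← sub_sub] at hx
    gcongr
  rw [norm_sub_sq_real, inner_smul_right, norm_smul, hν, Real.norm_of_nonneg hr.le,
    real_inner_comm] at h
  linarith

theorem pos_of_mem_ball_add_smul_of_taylor {u : E → ℝ} {w g x : E} {M r : ℝ} (hg : g ≠ 0)
    (hM : 0 ≤ M) (hMr : 2 * M * r ≤ ‖g‖) (hw : 0 < u w)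
    (htaylor : |u x - u w - ⟪g, x - w⟫_ℝ| ≤ M * ‖x - w‖ ^ 2)
    (hx : x ∈ ball (w + (r / ‖g‖) • g) r) : 0 < u x := by
  have hg₀ : 0 < ‖g‖ := norm_pos_iff.2 hg
  have hr : 0 < r := pos_of_mem_ball hx
  rw [div_eq_mul_inv, mul_smul] at hx
  have hν : ‖‖g‖⁻¹ • g‖ = 1 := by rw [norm_smul, norm_inv, norm_norm, inv_mul_cancel₀ hg₀.ne']
  have hball := sq_norm_sub_lt_of_mem_ball_add_smul hν hx
  rw [real_inner_smul_left] at hball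
  set p := ⟪g, x - w⟫_ℝ
  set q := ‖x - w‖ ^ 2
  have hq : ‖g‖ * q < 2 * r * p := by
    calc ‖g‖ * q < ‖g‖ * (2 * r * (‖g‖⁻¹ * p)) := by gcongr
      _ = 2 * r * p := by field_simp
  have hp : 0 < p := by nlinarith [sq_nonneg ‖x - w‖]
  have hMq : M * q ≤ p := by
    refine le_of_mul_le_mul_left ?_ hg₀
    nlinarith [mul_le_mul_of_nonneg_left hq.le hM, mul_le_mul_of_nonneg_right hMr hp.le]
  linarith [(abs_le.1 htaylor).1]

theorem ball_add_smul_subset_of_taylor {Ω : Set E} {u : E → ℝ} {w g : E} {M r : ℝ}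
    (hΩ : IsOpen Ω) (hpos : ∀ z ∈ Ω, 0 < u z) (hb0 : ∀ z ∈ frontier Ω, u z = 0) (hw : w ∈ Ω)
    (hg : g ≠ 0) (hM : 0 ≤ M) (hMr : 2 * M * r ≤ ‖g‖)
    (htaylor : ∀ x ∈ ball w (2 * r), |u x - u w - ⟪g, x - w⟫_ℝ| ≤ M * ‖x - w‖ ^ 2) :
    ball (w + (r / ‖g‖) • g) r ⊆ Ω := by
  rcases le_or_gt r 0 with hr | hr
  · simp [ball_eq_empty.2 hr]
  set c := w + (r / ‖g‖) • g
  have hwc : dist w c = r := by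
    rw [dist_eq_norm, sub_add_cancel_left, norm_neg, norm_smul, Real.norm_of_nonneg (by positivity),
      div_mul_cancel₀ _ (norm_ne_zero_iff.2 hg)]
  refine (convex_ball c r).isPreconnected.subset_of_disjoint_frontier hΩ ?_ ?_
  · have hw' : w ∈ closure (ball c r) := by
      rw [closure_ball c hr.ne', mem_closedBall, hwc]
    simpa only [inter_comm] using mem_closure_iff.1 hw' Ω hΩ hw
  · refine Set.disjoint_left.2 fun x hx hxΩ => ?_
    have hxw : x ∈ ball w (2 * r) := by
      rw [mem_ball] at hx ⊢
      linarith [dist_triangle x c w, dist_comm w c]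
    exact (pos_of_mem_ball_add_smul_of_taylor hg hM hMr (hpos w hw) (htaylor x hxw) hx).ne'
      (hb0 x hxΩ)

theorem exists_ball_add_smul_gradient_subset [CompleteSpace E] {Ω : Set E} {u : E → ℝ} {z₀ : E}
    (hΩ : IsOpen Ω) (hpos : ∀ z ∈ Ω, 0 < u z) (hb0 : ∀ z ∈ frontier Ω, u z = 0)
    (hz₀ : z₀ ∈ closure Ω) (hu : ContDiffAt ℝ 2 u z₀) (hg : ∇ u z₀ ≠ 0) :
    ∃ r > 0, ball (z₀ + (r / ‖∇ u z₀‖) • ∇ u z₀) r ⊆ Ω := by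
  obtain ⟨M, hM, s, hs, htaylor⟩ := hu.exists_norm_sub_sub_fderiv_le
  have hgc : ContinuousAt (∇ u) z₀ :=
    (toDual ℝ E).symm.continuous.continuousAt.comp (hu.continuousAt_fderiv two_ne_zero)
  set a := ‖∇ u z₀‖
  have ha : 0 < a := norm_pos_iff.2 hg
  have hlarge : ∀ᶠ w in 𝓝 z₀, a / 2 < ‖∇ u w‖ :=
    hgc.norm.eventually (lt_mem_nhds (half_lt_self ha))
  obtain ⟨ε, hε, hsub⟩ := Metric.mem_nhds_iff.1 (inter_mem hs hlarge)
  set r := min (ε / 3) (a / (4 * (M + 1)))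
  have hr : 0 < r := lt_min (by positivity) (by positivity)
  have hrε : 3 * r ≤ ε := by linarith [min_le_left (ε / 3) (a / (4 * (M + 1)))]
  have hMr : 2 * M * r ≤ a / 2 := by
    have h := min_le_right (ε / 3) (a / (4 * (M + 1)))
    rw [le_div_iff₀ (by positivity)] at h
    nlinarith
  refine ⟨r, hr, fun x hx => ?_⟩
  have hc : ContinuousAt (fun w => w + (r / ‖∇ u w‖) • ∇ u w) z₀ :=
    continuousAt_id.add ((continuousAt_const.div hgc.norm ha.ne').smul hgc)
  have hnear : ball z₀ r ∩ (fun w => w + (r / ‖∇ u w‖) • ∇ u w) ⁻¹' ball x r ∈ 𝓝 z₀ := by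
    refine inter_mem (ball_mem_nhds z₀ hr) (hc.preimage_mem_nhds (isOpen_ball.mem_nhds ?_))
    rwa [mem_ball_comm]
  obtain ⟨w, ⟨hwz, hxw⟩, hwΩ⟩ := mem_closure_iff_nhds.1 hz₀ _ hnear
  have hball : ball w (2 * r) ⊆ ball z₀ ε := by
    refine ball_subset_ball' ?_
    rw [mem_ball] at hwz
    linarith
  have hwε : w ∈ ball z₀ ε := hball (mem_ball_self (by positivity))
  have hgw : a / 2 < ‖∇ u w‖ := (hsub hwε).2
  refine ball_add_smul_subset_of_taylor hΩ hpos hb0 hwΩ (norm_pos_iff.1 (by linarith)) hM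
    (by linarith) (fun y hy => ?_) (mem_ball_comm.1 hxw)
  rw [gradient, toDual_symm_apply, ← Real.norm_eq_abs]
  exact htaylor w (hsub hwε).1 y (hsub (hball hy)).1

end InteriorBall

theorem Complex.norm_one_sub_conj_mul_sq_sub_norm_sub_sq (a w : ℂ) :
    ‖1 - conj a * w‖ ^ 2 - ‖w - a‖ ^ 2 = (1 - ‖a‖ ^ 2) * (1 - ‖w‖ ^ 2) := by
  simp only [Complex.sq_norm, Complex.normSq_apply, Complex.sub_re, Complex.sub_im,
    Complex.mul_re, Complex.mul_im, Complex.one_re, Complex.one_im, Complex.conj_re,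
    Complex.conj_im]
  ring

theorem Complex.norm_sub_lt_norm_one_sub_conj_mul {a w : ℂ} (ha : ‖a‖ < 1) (hw : ‖w‖ < 1) :
    ‖w - a‖ < ‖1 - conj a * w‖ := by
  have h := Complex.norm_one_sub_conj_mul_sq_sub_norm_sub_sq a w
  have hpos : 0 < (1 - ‖a‖ ^ 2) * (1 - ‖w‖ ^ 2) := by
    have := norm_nonneg a; have := norm_nonneg w
    apply mul_pos <;> nlinarith
  exact lt_of_pow_lt_pow_left₀ 2 (norm_nonneg _) (by linarith)

theorem Complex.one_sub_mul_le_of_norm_sub_le_mul {a w : ℂ} {ρ : ℝ} (hρ₀ : 0 ≤ ρ) (hρ : ρ < 1)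
    (ha : ‖a‖ < 1) (hw : ‖w‖ < 1) (h : ‖w - a‖ ≤ ρ * ‖1 - conj a * w‖) :
    (1 - ρ) * (1 - ‖a‖) ≤ 2 * (1 - ‖w‖ ^ 2) := by
  have hid := Complex.norm_one_sub_conj_mul_sq_sub_norm_sub_sq a w
  set D := ‖1 - conj a * w‖
  have hDa : 1 - ‖a‖ ≤ D := by
    have h := norm_sub_norm_le (1 : ℂ) (conj a * w)
    rw [norm_one, norm_mul, Complex.norm_conj] at h
    nlinarith [norm_nonneg a, norm_nonneg w]
  have ha' : 0 < 1 - ‖a‖ := by linarith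
  have hw' : 0 < 1 - ‖w‖ ^ 2 := by nlinarith [norm_nonneg w]
  have hρ' : 0 ≤ 1 - ρ ^ 2 := by nlinarith
  have hmain : (1 - ρ ^ 2) * (1 - ‖a‖) ^ 2 ≤ (1 - ‖a‖) * ((1 + ‖a‖) * (1 - ‖w‖ ^ 2)) := by
    calc (1 - ρ ^ 2) * (1 - ‖a‖) ^ 2 ≤ (1 - ρ ^ 2) * D ^ 2 := by gcongr
      _ ≤ D ^ 2 - ‖w - a‖ ^ 2 := by nlinarith [mul_self_le_mul_self (norm_nonneg _) h]
      _ = (1 - ‖a‖) * ((1 + ‖a‖) * (1 - ‖w‖ ^ 2)) := by rw [hid]; ring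
  have hcancel : (1 - ρ ^ 2) * (1 - ‖a‖) ≤ (1 + ‖a‖) * (1 - ‖w‖ ^ 2) :=
    le_of_mul_le_mul_left (by nlinarith) ha'
  nlinarith

theorem Complex.one_sub_dist_div_mul_le_of_mapsTo_ball {F : ℂ → ℂ} {c x : ℂ} {r : ℝ}
    (hd : DifferentiableOn ℂ F (ball c r)) (hF : MapsTo F (ball c r) (ball 0 1))
    (hx : x ∈ ball c r) :
    (1 - dist x c / r) * (1 - ‖F c‖) ≤ 2 * (1 - ‖F x‖ ^ 2) := by
  have hr : 0 < r := pos_of_mem_ball hx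
  have hF1 : ∀ y ∈ ball c r, ‖F y‖ < 1 := fun y hy => mem_ball_zero_iff.1 (hF hy)
  set a := F c
  have ha : ‖a‖ < 1 := hF1 c (mem_ball_self hr)
  have hlt : ∀ y ∈ ball c r, ‖F y - a‖ < ‖1 - conj a * F y‖ := fun y hy =>
    Complex.norm_sub_lt_norm_one_sub_conj_mul ha (hF1 y hy)
  have hden : ∀ y ∈ ball c r, 0 < ‖1 - conj a * F y‖ := fun y hy =>
    (norm_nonneg _).trans_lt (hlt y hy)
  -- the Möbius map sending `a` to `0` reduces the estimate to the Schwarz lemma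
  set g := fun y => (F y - a) / (1 - conj a * F y)
  have hgd : DifferentiableOn ℂ g (ball c r) :=
    (hd.sub_const a).div ((differentiableOn_const 1).sub (hd.const_mul _))
      fun y hy => norm_pos_iff.1 (hden y hy)
  have hgc : g c = 0 := by simp [g, a]
  have hgmaps : MapsTo g (ball c r) (closedBall (g c) 1) := fun y hy => by
    rw [hgc, mem_closedBall_zero_iff, norm_div]
    exact ((div_lt_one (hden y hy)).2 (hlt y hy)).le
  have hschwarz := Complex.dist_le_div_mul_dist_of_mapsTo_ball hgd hgmaps hx
  rw [hgc, dist_zero_right, norm_div, div_le_iff₀ (hden x hx), one_div_mul_eq_div] at hschwarz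
  exact Complex.one_sub_mul_le_of_norm_sub_le_mul (by positivity) ((div_lt_one hr).2 hx)
    ha (hF1 x hx) hschwarz

theorem HasDerivAt.le_neg_of_le_sub_mul {f : ℝ → ℝ} {f' a b c : ℝ} (hf : HasDerivAt f f' a)
    (hab : a < b) (hle : ∀ s ∈ Ioo a b, f s ≤ f a - c * (s - a)) : f' ≤ -c := by
  refine le_of_tendsto ((hasDerivAt_iff_tendsto_slope.1 hf).mono_left (nhdsGT_le_nhdsNE a)) ?_
  filter_upwards [Ioo_mem_nhdsGT hab] with s hs
  rw [slope_def_field, div_le_iff₀ (sub_pos.2 hs.1)]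
  linarith [hle s hs]

theorem Complex.inner_mul_neg_of_mapsTo_ball {F : ℂ → ℂ} {F' z₀ n : ℂ} {r : ℝ} (hr : 0 < r)
    (hn : ‖n‖ = 1) (hd : DifferentiableOn ℂ F (ball (z₀ + r • n) r))
    (hF : MapsTo F (ball (z₀ + r • n) r) (ball 0 1)) (hz₀ : ‖F z₀‖ = 1)
    (hF' : HasDerivAt F F' z₀) : ⟪F z₀, F' * n⟫_ℝ < 0 := by
  set p := z₀ + r • n
  have hdist : ∀ s ∈ Ioo 0 r, dist (z₀ + s • n) p = r - s := fun s hs => by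
    rw [dist_eq_norm, add_sub_add_left_eq_sub, ← sub_smul, norm_smul, hn, mul_one,
      Real.norm_of_nonpos (by linarith [hs.2]), neg_sub]
  have hline : HasDerivAt (fun s : ℝ => z₀ + s • n) n 0 := by
    simpa using ((hasDerivAt_id (0 : ℝ)).smul_const n).const_add z₀
  have hF'' : HasDerivAt F F' (z₀ + (0 : ℝ) • n) := by rwa [zero_smul, add_zero]
  have hderiv := (hF''.comp 0 hline).norm_sq
  simp only [Function.comp_apply, zero_smul, add_zero] at hderiv
  set κ := (1 - ‖F p‖) / (2 * r)
  have hκ : 0 < κ := div_pos (sub_pos.2 (mem_ball_zero_iff.1 (hF (mem_ball_self hr))))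
    (by positivity)
  -- Schwarz–Pick on the ball makes `‖F‖ ^ 2` decay linearly along the inner normal `n`
  have hle := hderiv.le_neg_of_le_sub_mul hr (c := κ) fun s hs => by
    have hx : z₀ + s • n ∈ ball p r := by rw [mem_ball, hdist s hs]; linarith [hs.1]
    have h := Complex.one_sub_dist_div_mul_le_of_mapsTo_ball hd hF hx
    rw [hdist s hs, one_sub_div hr.ne', sub_sub_cancel] at h
    simp only [zero_smul, add_zero, hz₀, sub_zero]
    have : κ * s = s / r * (1 - ‖F p‖) / 2 := by simp only [κ]; field_simp
    linarith
  linarith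

noncomputable def complexGradient (u : ℂ → ℝ) (z : ℂ) : ℂ := ux u z - I * uy u z

theorem fderiv_apply_eq_re_complexGradient_mul (u : ℂ → ℝ) (z v : ℂ) :
    fderiv ℝ u z v = (complexGradient u z * v).re := by
  have hv : v = v.re • (1 : ℂ) + v.im • I := by simp [Complex.real_smul, Complex.re_add_im]
  rw [congrArg (fderiv ℝ u z) hv, map_add, map_smul, map_smul]
  simp [complexGradient, ux, uy, mul_comm]

theorem gradient_eq_conj_complexGradient (u : ℂ → ℝ) (z : ℂ) :
    ∇ u z = conj (complexGradient u z) := by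
  refine ext_inner_right ℝ fun v => ?_
  rw [gradient, toDual_symm_apply, fderiv_apply_eq_re_complexGradient_mul, Complex.inner,
    Complex.conj_conj, mul_comm]

theorem norm_complexGradient (u : ℂ → ℝ) (z : ℂ) : ‖complexGradient u z‖ = gradNorm u z := by
  simp [Complex.norm_def, Complex.normSq_apply, gradNorm, complexGradient, ← sq]

section Harmonic

variable {u : ℂ → ℝ} {U : Set ℂ} {z : ℂ}

theorem HarmonicOnD.differentiableAt_fderiv (hu : HarmonicOnD u U) (hU : IsOpen U) (hz : z ∈ U) :
    DifferentiableAt ℝ (fderiv ℝ u) z :=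
  ((hu.1.contDiffAt (hU.mem_nhds hz)).fderiv_right (m := 1) le_rfl).differentiableAt one_ne_zero

theorem HarmonicOnD.harmonicAt (hu : HarmonicOnD u U) (hU : IsOpen U) (hz : z ∈ U) :
    HarmonicAt u z := by
  refine ⟨hu.1.contDiffAt (hU.mem_nhds hz), ?_⟩
  filter_upwards [hU.mem_nhds hz] with y hy
  have hd := hu.differentiableAt_fderiv hU hy
  rw [laplacian_eq_iteratedFDeriv_complexPlane]
  simp only [iteratedFDeriv_two_apply, Matrix.cons_val_zero, Matrix.cons_val_one, Pi.zero_apply]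
  rw [← fderiv_fderiv_apply hd, ← fderiv_fderiv_apply hd]
  exact hu.2 y hy

theorem HarmonicOnD.hasDerivAt_complexGradient (hu : HarmonicOnD u U) (hU : IsOpen U)
    (hz : z ∈ U) :
    HasDerivAt (complexGradient u) (uxx u z - I * uxy u z) z := by
  have hC : HasDerivAt (complexGradient u) (deriv (complexGradient u) z) z :=
    (HarmonicAt.differentiableAt_complex_partial (hu.harmonicAt hU hz)).hasDerivAt
  have hd := hu.differentiableAt_fderiv hU hz
  have hux : DifferentiableAt ℝ (ux u) z := hd.clm_apply (differentiableAt_const _)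
  have huy : DifferentiableAt ℝ (uy u) z := hd.clm_apply (differentiableAt_const _)
  have hR := (ofRealCLM.hasFDerivAt.comp z hux.hasFDerivAt).sub
    ((ofRealCLM.hasFDerivAt.comp z huy.hasFDerivAt).const_mul I)
  have hI : I * deriv (complexGradient u) z = uxy u z - I * uyy u z := by
    simpa [uxy, uyy] using congrArg (· I) ((hC.hasFDerivAt.restrictScalars ℝ).unique hR)
  have hlap : (uxx u z : ℂ) + uyy u z = 0 := by exact_mod_cast hu.2 z hz
  convert hC using 1
  linear_combination hlap + I * hI - (deriv (complexGradient u) z + uyy u z) * I_sq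

theorem inner_complexGradient_mul_conj (hlap : uxx u z + uyy u z = 0) :
    ⟪complexGradient u z, (uxx u z - I * uxy u z) * conj (complexGradient u z)⟫_ℝ =
      -(uxx u z * uy u z ^ 2 + uyy u z * ux u z ^ 2 - 2 * uxy u z * ux u z * uy u z) := by
  simp only [Complex.inner, complexGradient, map_sub, map_mul,
    Complex.conj_ofReal, Complex.conj_I, Complex.mul_re, Complex.mul_im, Complex.sub_re,
    Complex.sub_im, Complex.ofReal_re, Complex.ofReal_im, Complex.I_re, Complex.I_im,
    Complex.neg_re, Complex.neg_im]
  linear_combination ux u z ^ 2 * hlap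

end Harmonic

theorem boundary_curvature_pos_general (Ω U : Set ℂ) (u : ℂ → ℝ)
    (hΩ : IsOpen Ω)
    (hU : IsOpen U) (hclos : closure Ω ⊆ U) (hu : HarmonicOnD u U)
    (hpos : ∀ z ∈ Ω, 0 < u z)
    (hb0 : ∀ z ∈ frontier Ω, u z = 0)
    (hb1 : ∀ z ∈ frontier Ω, gradNorm u z = 1)
    (hlt : ∀ z ∈ Ω, gradNorm u z < 1) :
    ∀ z ∈ frontier Ω,
      0 < (uxx u z * uy u z ^ 2 + uyy u z * ux u z ^ 2 -
            2 * uxy u z * ux u z * uy u z) / gradNorm u z ^ 3 := by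
  intro z₀ hz₀
  have hz₀U : z₀ ∈ U := hclos (frontier_subset_closure hz₀)
  have hn : ‖∇ u z₀‖ = 1 := by
    rw [gradient_eq_conj_complexGradient, Complex.norm_conj, norm_complexGradient, hb1 z₀ hz₀]
  obtain ⟨r, hr, hball⟩ := exists_ball_add_smul_gradient_subset hΩ hpos hb0
    (frontier_subset_closure hz₀) (hu.1.contDiffAt (hU.mem_nhds hz₀U))
    (norm_ne_zero_iff.1 (hn ▸ one_ne_zero))
  rw [hn, div_one] at hball
  have hneg := Complex.inner_mul_neg_of_mapsTo_ball hr hn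
    (fun w hw => (hu.hasDerivAt_complexGradient hU
      (hclos (subset_closure (hball hw)))).differentiableAt.differentiableWithinAt)
    (fun w hw => by rw [mem_ball_zero_iff, norm_complexGradient]; exact hlt w (hball hw))
    (by rw [norm_complexGradient, hb1 z₀ hz₀]) (hu.hasDerivAt_complexGradient hU hz₀U)
  rw [gradient_eq_conj_complexGradient, inner_complexGradient_mul_conj (hu.2 z₀ hz₀U)] at hneg
  rw [hb1 z₀ hz₀, one_pow, div_one]
  linarith

/-- The boundary of an exceptional domain with `|∇u| < 1` is strictly concave:
at each boundary point the signed curvature of the level set `u = 0` is positive. -/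
theorem boundary_curvature_pos (Ω U : Set ℂ) (u : ℂ → ℝ)
    (hΩ : IsOpen Ω) (hconn : IsConnected Ω) (hfrne : (frontier Ω).Nonempty)
    (hU : IsOpen U) (hclos : closure Ω ⊆ U) (hu : HarmonicOnD u U)
    (hpos : ∀ z ∈ Ω, 0 < u z)
    (hb0 : ∀ z ∈ frontier Ω, u z = 0)
    (hb1 : ∀ z ∈ frontier Ω, gradNorm u z = 1)
    (hlt : ∀ z ∈ Ω, gradNorm u z < 1) :
    ∀ z ∈ frontier Ω,
      0 < (uxx u z * uy u z ^ 2 + uyy u z * ux u z ^ 2 -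
            2 * uxy u z * ux u z * uy u z) / gradNorm u z ^ 3 :=
  boundary_curvature_pos_general Ω U u hΩ hU hclos hu hpos hb0 hb1 hlt
end

section
/- (Fuchs' theorem, special case) Let Ω be an unbounded region of ℂ, and let f be holomorphic and bounded in Ω with limsup |f(z)| ≤ 1 as z approaches any boundary point ζ ∈ ∂Ω from inside Ω. Then |f(z)| ≤ 1 for all z in Ω. -/
/-! Lindelöf's argument. Pick a frontier point `a` with `‖f‖ ≤ L` on `Ω ∩ ball a δ` and
`0 < d < δ`. On the bounded region `Ω ∩ {d < |w - a| < R}` the function `f ^ n * d / (w - a)` is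
eventually at most `L ^ n` near every frontier point: near `frontier Ω` and the inner circle
because `‖f‖ ≤ L` there and `d / |w - a| ≤ 1`, near the outer circle because for `R` large the
factor `d / |w - a|` absorbs `M ^ n`. The maximum principle gives
`‖f z‖ ^ n * d / |z - a| ≤ L ^ n` for every `n`, hence `‖f z‖ ≤ L`. -/

open Set Filter Bornology Topology Metric

theorem Complex.norm_le_of_isBounded_of_frontier_eventually_norm_le {E F : Type*}
    [NormedAddCommGroup E] [NormedSpace ℂ E] [Nontrivial E] [NormedAddCommGroup F]
    [NormedSpace ℂ F] {g : E → F} {U : Set E} {C : ℝ} (hU : IsOpen U) (hUb : IsBounded U)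
    (hg : DifferentiableOn ℂ g U) (hfr : ∀ ζ ∈ frontier U, ∀ᶠ w in 𝓝[U] ζ, ‖g w‖ ≤ C)
    {z : E} (hz : z ∈ U) : ‖g z‖ ≤ C := by
  by_contra! hgz
  -- The closure of the superlevel set `V` stays inside `U`, so the classical maximum principle
  -- applies on `V`.
  set V := U ∩ g ⁻¹' {w | C < ‖w‖}
  have hVU : V ⊆ U := inter_subset_left
  have hV : IsOpen V :=
    hg.continuousOn.isOpen_inter_preimage hU (isOpen_lt continuous_const continuous_norm)
  have hclV : closure V ⊆ U := by
    intro ζ hζ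
    by_contra hζU
    have hζfr : ζ ∈ frontier U := ⟨closure_mono hVU hζ, by rwa [hU.interior_eq]⟩
    have := mem_closure_iff_nhdsWithin_neBot.mp hζ
    obtain ⟨w, hwC, hwV⟩ :=
      (((hfr ζ hζfr).filter_mono (nhdsWithin_mono ζ hVU)).and self_mem_nhdsWithin).exists
    exact hwV.2.not_ge hwC
  have hle : ∀ ζ ∈ frontier V, ‖g ζ‖ ≤ C := fun ζ hζ =>
    not_lt.mp fun h => hV.frontier_eq ▸ hζ |>.2 ⟨hclV hζ.1, h⟩
  exact (norm_le_of_forall_mem_frontier_norm_le (hUb.subset hVU)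
    ((hg.mono hclV).diffContOnCl) hle (subset_closure ⟨hz, hgz⟩)).not_gt hgz

theorem le_of_forall_pow_mul_le {x L c : ℝ} (hL : 0 < L) (hc : 0 < c)
    (h : ∀ n : ℕ, x ^ n * c ≤ L ^ n) : x ≤ L := by
  by_contra! hLx
  obtain ⟨n, hn⟩ := pow_unbounded_of_one_lt c⁻¹ ((one_lt_div hL).mpr hLx)
  rw [div_pow, lt_div_iff₀ (pow_pos hL n), inv_mul_lt_iff₀ hc] at hn
  linarith [h n, mul_comm c (x ^ n)]

theorem frontier_inter_subset_union {X : Type*} [TopologicalSpace X] (s t : Set X) :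
    frontier (s ∩ t) ⊆ frontier s ∪ frontier t :=
  (frontier_inter_subset s t).trans (union_subset_union inter_subset_left inter_subset_right)

theorem frontier_inter_ball_inter_compl_closedBall_subset {X : Type*} [PseudoMetricSpace X]
    (s : Set X) (a : X) (R r : ℝ) :
    frontier (s ∩ (ball a R ∩ (closedBall a r)ᶜ)) ⊆ frontier s ∪ sphere a R ∪ sphere a r := by
  intro x hx
  rcases frontier_inter_subset_union _ _ hx with hs | hx
  · exact .inl (.inl hs)
  rcases frontier_inter_subset_union _ _ hx with hR | hr
  · exact .inl (.inr (frontier_ball_subset_sphere hR))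
  · rw [frontier_compl] at hr
    exact .inr (frontier_closedBall_subset_sphere hr)

namespace Complex

variable {Ω : Set ℂ} {f : ℂ → ℂ} {a z : ℂ} {L M d δ : ℝ}

theorem norm_pow_mul_div_dist_le (hΩ : IsOpen Ω) (hf : DifferentiableOn ℂ f Ω)
    (hM : ∀ w ∈ Ω, ‖f w‖ ≤ M) (hL : 0 < L)
    (hfr : ∀ ζ ∈ frontier Ω, ∀ᶠ w in 𝓝[Ω] ζ, ‖f w‖ ≤ L)
    (hnear : ∀ w ∈ Ω, dist w a < δ → ‖f w‖ ≤ L) (hd : 0 ≤ d) (hdδ : d < δ) (n : ℕ)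
    (hz : z ∈ Ω) (hdz : d < dist z a) :
    ‖f z‖ ^ n * (d / dist z a) ≤ L ^ n := by
  set R := max (d * (M / L) ^ n) (dist z a) + 1
  have hR : d * (M / L) ^ n < R := by grind
  set U := Ω ∩ (ball a R ∩ (closedBall a d)ᶜ)
  set g : ℂ → ℂ := fun w => f w ^ n * (d / (w - a))
  have hg_norm (w : ℂ) : ‖g w‖ = ‖f w‖ ^ n * (d / dist w a) := by
    simp [g, dist_eq, abs_of_nonneg hd]
  have hg_le (w : ℂ) (hw : w ∈ U) (h : ‖f w‖ ≤ L ∨ d * (M / L) ^ n < dist w a) :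
      ‖g w‖ ≤ L ^ n := by
    have hdw : d < dist w a := by simpa using hw.2.2
    rw [hg_norm, ← mul_div_assoc, div_le_iff₀ (hd.trans_lt hdw)]
    rcases h with h | h
    · gcongr
    · calc ‖f w‖ ^ n * d ≤ M ^ n * d := by gcongr; exact hM w hw.1
        _ = L ^ n * (d * (M / L) ^ n) := by rw [div_pow]; field_simp
        _ ≤ L ^ n * dist w a := by gcongr
  have hU : IsOpen U := hΩ.inter (isOpen_ball.inter isClosed_closedBall.isOpen_compl)
  have hUb : IsBounded U := isBounded_ball.subset fun w hw => hw.2.1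
  have hgU : DifferentiableOn ℂ g U := by
    refine ((hf.mono inter_subset_left).pow n).mul ((differentiableOn_const _).div
      (differentiableOn_id.sub_const a) fun w hw => sub_ne_zero.mpr ?_)
    rintro rfl
    exact hw.2.2 (mem_closedBall_self hd)
  have hfrU : ∀ ζ ∈ frontier U, ∀ᶠ w in 𝓝[U] ζ, ‖g w‖ ≤ L ^ n := by
    intro ζ hζ
    have hζ' : ∀ᶠ w in 𝓝[U] ζ, ‖f w‖ ≤ L ∨ d * (M / L) ^ n < dist w a := by
      rcases frontier_inter_ball_inter_compl_closedBall_subset Ω a R d hζ with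
        (hζΩ | hζR) | hζd
      · exact ((hfr ζ hζΩ).filter_mono (nhdsWithin_mono ζ inter_subset_left)).mono
          fun _ => Or.inl
      · have hζR : d * (M / L) ^ n < dist ζ a := by rwa [mem_sphere.mp hζR]
        filter_upwards [nhdsWithin_le_nhds ((isOpen_lt continuous_const
          (continuous_id.dist continuous_const)).mem_nhds hζR)] with w hw using Or.inr hw
      · have hζd : ζ ∈ ball a δ := by rwa [mem_ball, mem_sphere.mp hζd]
        filter_upwards [nhdsWithin_le_nhds (isOpen_ball.mem_nhds hζd), self_mem_nhdsWithin]
          with w hwδ hwU using Or.inl (hnear w hwU.1 hwδ)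
    filter_upwards [hζ', self_mem_nhdsWithin] with w hw hwU using hg_le w hwU hw
  have hzU : z ∈ U := ⟨hz, by simp only [mem_ball]; grind, by simpa using hdz⟩
  simpa only [hg_norm] using
    norm_le_of_isBounded_of_frontier_eventually_norm_le hU hUb hgU hfrU hzU

theorem norm_le_of_norm_bounded_of_frontier_eventually_norm_le (hΩ : IsOpen Ω)
    (hf : DifferentiableOn ℂ f Ω) (hM : ∀ w ∈ Ω, ‖f w‖ ≤ M) (hL : 0 < L)
    (hfr : ∀ ζ ∈ frontier Ω, ∀ᶠ w in 𝓝[Ω] ζ, ‖f w‖ ≤ L) (hfrne : (frontier Ω).Nonempty)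
    (hz : z ∈ Ω) : ‖f z‖ ≤ L := by
  obtain ⟨a, ha⟩ := hfrne
  obtain ⟨δ, hδ, hnear⟩ := Metric.mem_nhdsWithin_iff.mp (hfr a ha)
  rcases lt_or_ge (dist z a) δ with hza | hza
  · exact hnear ⟨hza, hz⟩
  have hdz : δ / 2 < dist z a := by linarith
  exact le_of_forall_pow_mul_le hL (div_pos (half_pos hδ) (by linarith)) fun n =>
    norm_pow_mul_div_dist_le hΩ hf hM hL hfr (fun w hw hwa => hnear ⟨hwa, hw⟩)
      (half_pos hδ).le (half_lt_self hδ) n hz hdz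

end Complex

theorem fuchs_bounded_case_general (Ω : Set ℂ) (f : ℂ → ℂ)
    (hΩ : IsOpen Ω) (hΩne : Ω ≠ Set.univ)
    (hf : DifferentiableOn ℂ f Ω)
    (hbdd : ∃ M : ℝ, ∀ z ∈ Ω, ‖f z‖ ≤ M)
    (hbound : ∀ ζ ∈ frontier Ω,
      Filter.limsup (fun z => ‖f z‖) (nhdsWithin ζ Ω) ≤ 1) :
    ∀ z ∈ Ω, ‖f z‖ ≤ 1 := by
  intro z hz
  obtain ⟨M, hM⟩ := hbdd
  have hfrne : (frontier Ω).Nonempty := nonempty_frontier_iff.mpr ⟨⟨z, hz⟩, hΩne⟩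
  refine le_of_forall_gt_imp_ge_of_dense fun L hL =>
    Complex.norm_le_of_norm_bounded_of_frontier_eventually_norm_le hΩ hf hM
      (zero_lt_one.trans hL) (fun ζ hζ => ?_) hfrne hz
  have hfζ : IsBoundedUnder (· ≤ ·) (𝓝[Ω] ζ) (‖f ·‖) :=
    isBoundedUnder_of_eventually_le (eventually_mem_nhdsWithin.mono hM)
  exact (eventually_lt_of_limsup_lt ((hbound ζ hζ).trans_lt hL) hfζ).mono fun _ => le_of_lt

/-- Fuchs' Phragmén–Lindelöf theorem, special case: a bounded holomorphic function on an
unbounded region whose boundary limsup of `|f|` is at most `1` satisfies `|f| ≤ 1`. -/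
theorem fuchs_bounded_case (Ω : Set ℂ) (f : ℂ → ℂ)
    (hΩ : IsOpen Ω) (hconn : IsConnected Ω) (hΩne : Ω ≠ Set.univ)
    (hunb : ¬ Bornology.IsBounded Ω)
    (hf : DifferentiableOn ℂ f Ω)
    (hbdd : ∃ M : ℝ, ∀ z ∈ Ω, ‖f z‖ ≤ M)
    (hbound : ∀ ζ ∈ frontier Ω,
      Filter.limsup (fun z => ‖f z‖) (nhdsWithin ζ Ω) ≤ 1) :
    ∀ z ∈ Ω, ‖f z‖ ≤ 1 :=
  fuchs_bounded_case_general Ω f hΩ hΩne hf hbdd hbound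
end

section
/- Consider the curve γ parametrized by x(t) = 2 arctan( sin(2α) / (t² + cos(2α)) ), y(t) = cos α · log( (t² + 2 sin α · t + 1)/(t² − 2 sin α · t + 1) ) for t ∈ ℝ, where α ∈ (0, π/2). Then γ satisfies the implicit equation cos²α · cosh( y / cos α ) = sin²α + cos( 2α − x ). -/
/-!
Write `A, B = t² ± 2 t sin α + 1`. Then `A + B = 2 (t² + 1)` and
`A B = |t² + e^{2iα}|² = (t² + cos 2α)² + sin² 2α`, so
`cosh (log (A / B)) = (A + B)² / (2 A B) - 1` is a rational function of `t` with denominator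
`A B`. Since `2 arctan (b / a) ≡ 2 arg (a + i b)` modulo `2π`, the same holds for `cos (2α - x)`,
with `x = 2 arg (t² + e^{2iα})`, and the identity reduces to
`(t⁴ + 2 t² cos 2α + 1) + ((t⁴ + 1) cos 2α + 2 t²) = (1 + cos 2α) (t² + 1)²`.
-/

open Real

namespace Real

theorem cos_two_mul_arctan (u : ℝ) : cos (2 * arctan u) = (1 - u ^ 2) / (1 + u ^ 2) := by
  rw [cos_two_mul, cos_sq_arctan]
  field_simp
  ring

theorem sin_two_mul_arctan (u : ℝ) : sin (2 * arctan u) = 2 * u / (1 + u ^ 2) := by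
  rw [sin_two_mul, ← tan_mul_cos (cos_arctan_pos u).ne', tan_arctan]
  linear_combination 2 * u * cos_sq_arctan u

theorem cos_sub_two_mul_arctan_div (θ b : ℝ) {a : ℝ} (ha : a ≠ 0) :
    cos (θ - 2 * arctan (b / a)) =
      ((a ^ 2 - b ^ 2) * cos θ + 2 * a * b * sin θ) / (a ^ 2 + b ^ 2) := by
  rw [cos_sub, cos_two_mul_arctan, sin_two_mul_arctan]
  field_simp

theorem cos_sub_two_mul_arctan_sin_div (θ t : ℝ) (h : t ^ 2 + cos θ ≠ 0) :
    cos (θ - 2 * arctan (sin θ / (t ^ 2 + cos θ))) =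
      (1 + cos θ) * (t ^ 2 + 1) ^ 2 / ((t ^ 2 + cos θ) ^ 2 + sin θ ^ 2) - 1 := by
  have hpos : 0 < (t ^ 2 + cos θ) ^ 2 + sin θ ^ 2 := by positivity
  rw [cos_sub_two_mul_arctan_div _ _ h, eq_sub_iff_add_eq, div_add_one hpos.ne']
  congr 1
  linear_combination (2 * t ^ 2 + cos θ + 1) * sin_sq_add_cos_sq θ

theorem cosh_log_div {x y : ℝ} (hx : 0 < x) (hy : 0 < y) :
    cosh (log (x / y)) = (x + y) ^ 2 / (x * y) / 2 - 1 := by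
  rw [cosh_log (div_pos hx hy)]
  field_simp
  ring

end Real

theorem sq_add_two_mul_mul_add_one_pos {s : ℝ} (hs : s ^ 2 < 1) (t : ℝ) :
    0 < t ^ 2 + 2 * s * t + 1 := by
  nlinarith [sq_nonneg (t + s)]

theorem scherk_quadratics_mul (α t : ℝ) :
    (t ^ 2 + 2 * sin α * t + 1) * (t ^ 2 - 2 * sin α * t + 1) =
      (t ^ 2 + cos (2 * α)) ^ 2 + sin (2 * α) ^ 2 := by
  rw [cos_two_mul_eq_one_sub, sin_two_mul]
  linear_combination (-4 * sin α ^ 2) * sin_sq_add_cos_sq α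

/-- The parametrized boundary curve of the exceptional domain associated to the
horizontal Scherk surface satisfies the implicit equation
`cos²α · cosh(y/cos α) = sin²α + cos(2α − x)`. -/
theorem scherk_curve_implicit (α t : ℝ) (hα : α ∈ Set.Ioo 0 (π / 2))
    (ht : t ^ 2 + Real.cos (2 * α) ≠ 0) :
    Real.cos α ^ 2 *
        Real.cosh ((Real.cos α *
          Real.log ((t ^ 2 + 2 * Real.sin α * t + 1) /
            (t ^ 2 - 2 * Real.sin α * t + 1))) / Real.cos α) =
      Real.sin α ^ 2 +
        Real.cos (2 * α -
          2 * Real.arctan (Real.sin (2 * α) / (t ^ 2 + Real.cos (2 * α)))) := by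
  have hc : 0 < cos α := cos_pos_of_mem_Ioo ⟨by linarith [hα.1, pi_pos], hα.2⟩
  have hs : sin α ^ 2 < 1 := by
    rw [sin_sq]
    linarith [pow_pos hc 2]
  have hA := sq_add_two_mul_mul_add_one_pos hs t
  have hB : 0 < t ^ 2 - 2 * sin α * t + 1 := by
    simpa [sub_eq_add_neg] using sq_add_two_mul_mul_add_one_pos (s := -sin α) (by rwa [neg_sq]) t
  rw [mul_div_cancel_left₀ _ hc.ne', cosh_log_div hA hB, cos_sub_two_mul_arctan_sin_div _ _ ht,
    ← scherk_quadratics_mul, cos_two_mul]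
  linear_combination -sin_sq_add_cos_sq α
end
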